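/- arXiv:1112.1180 — 4 statements merged into one kernel-verified Lean document; each statement's English description precedes it below -/
import Mathlib

section
/- In a graded connected commutative Hopf algebra H over a field of characteristic zero, if x is in the n-th level of the coradical filtration H^(n) (i.e. the n-fold iterated reduced coproduct Δ^(n) vanishes on x), then the (n+1)-fold convolution power σ_{n+1} = σ^{⋆(n+1)} of σ = S ⋆ P (antipode convolved with the projection onto the augmentation ideal) vanishes on x. -/
open TensorProduct

variable (K : Type*) [Field K] [CharZero K]
variable (H : Type*) [CommRing H] [HopfAlgebra K H]

/-- The reduced coproduct `Δ' = Δ - 1⊗id - id⊗1`. -/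
noncomputable def redComul : H →ₗ[K] H ⊗[K] H :=
  Coalgebra.comul - TensorProduct.mk K H H 1 - (TensorProduct.mk K H H).flip 1

/-- `H ⊗ (⨂ⁿ H) ≃ ⨂ⁿ⁺¹ H`. -/
noncomputable def tpowSuccEquiv (n : ℕ) :
    (H ⊗[K] (⨂[K]^n H)) ≃ₗ[K] ⨂[K]^(n+1) H :=
  (TensorProduct.congr
      ((PiTensorProduct.subsingletonEquiv (0 : Fin 1)).symm) (LinearEquiv.refl K _)).trans
  ((PiTensorProduct.tmulEquiv K H).trans
    (PiTensorProduct.reindex K (fun _ => H) ((finSumFinEquiv).trans (finCongr (by omega)))))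

/-- The iterated reduced coproduct: `DIter 0 = id` (as a map `H → ⨂¹H`) and
`DIter (n+1) = (id ⊗ DIter n) ∘ Δ'`, so that for `n ≥ 1`, `DIter n = Δ^(n)`. -/
noncomputable def DIter : (n : ℕ) → (H →ₗ[K] ⨂[K]^(n+1) H)
  | 0 => ((PiTensorProduct.subsingletonEquiv (s := fun _ => H) (0 : Fin 1)).symm : H ≃ₗ[K] ⨂[K]^1 H).toLinearMap
  | n+1 => (tpowSuccEquiv K H (n+1)).toLinearMap ∘ₗ
      (LinearMap.lTensor H (DIter n)) ∘ₗ redComul K H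

/-- Convolution product of linear endomorphisms of a Hopf algebra. -/
noncomputable def conv (f g : H →ₗ[K] H) : H →ₗ[K] H :=
  LinearMap.mul' K H ∘ₗ TensorProduct.map f g ∘ₗ Coalgebra.comul

/-- Projection onto the augmentation ideal, `P = id - η ∘ ε`. -/
noncomputable def augProj : H →ₗ[K] H :=
  LinearMap.id - (Algebra.linearMap K H ∘ₗ Coalgebra.counit)

/-- `σ = S ⋆ P`. -/
noncomputable def sigmaMap : H →ₗ[K] H :=
  conv K H (HopfAlgebra.antipode (R := K)) (augProj K H)

/-- Convolution powers `σ^{⋆ j}`, with `σ^{⋆0} = η ∘ ε` the convolution unit. -/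
noncomputable def sigmaPow : ℕ → (H →ₗ[K] H)
  | 0 => Algebra.linearMap K H ∘ₗ Coalgebra.counit
  | j+1 => conv K H (sigmaMap K H) (sigmaPow j)

variable (𝒜 : ℕ → Submodule K H)

/-- The coproduct is compatible with the grading:
`Δ(𝒜 n) ⊆ Σ_{p+q=n} 𝒜 p ⊗ 𝒜 q`. -/
def ComulGraded : Prop :=
  ∀ n : ℕ, ∀ x ∈ 𝒜 n,
    Coalgebra.comul (R := K) x ∈
      ⨆ pq : {pq : ℕ × ℕ // pq.1 + pq.2 = n},
        LinearMap.range (TensorProduct.map (𝒜 pq.1.1).subtype (𝒜 pq.1.2).subtype)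

/-!
Since `σ(1) = 0`, every convolution power `σ^{⋆(j+1)}` kills `1`, so in
`σ^{⋆(n+2)} = m ∘ (σ ⊗ σ^{⋆(n+1)}) ∘ Δ` only the reduced coproduct `Δ'` contributes.
By induction `σ^{⋆(n+1)}` vanishes on the kernel of `Δ^(n)`; as tensoring over a field is
exact, `σ ⊗ σ^{⋆(n+1)}` then vanishes on the kernel of `id ⊗ Δ^(n)`, which contains `Δ'(x)`
whenever `Δ^(n+1)(x) = 0`.
-/

theorem TensorProduct.ker_lTensor_le_ker_map {R M N P Q T : Type*} [CommRing R]
    [AddCommGroup M] [AddCommGroup N] [AddCommGroup P] [AddCommGroup Q] [AddCommGroup T]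
    [Module R M] [Module R N] [Module R P] [Module R Q] [Module R T] [Module.Flat R M]
    {f : N →ₗ[R] P} {h : N →ₗ[R] T} (hker : LinearMap.ker f ≤ LinearMap.ker h)
    (g : M →ₗ[R] Q) :
    LinearMap.ker (LinearMap.lTensor M f) ≤ LinearMap.ker (TensorProduct.map g h) := by
  intro t ht
  obtain ⟨s, rfl⟩ :=
    (Module.Flat.lTensor_exact M (LinearMap.exact_subtype_ker_map f) t).mp ht
  have h_ker : h ∘ₗ (LinearMap.ker f).subtype = 0 := by
    ext ⟨y, hy⟩
    exact hker hy
  rw [LinearMap.mem_ker, LinearMap.map_lTensor, h_ker, TensorProduct.map_zero_right,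
    LinearMap.zero_apply]

variable {k A : Type*} [Field k] [CommRing A] [HopfAlgebra k A]

lemma conv_apply (f g : A →ₗ[k] A) (x : A) :
    conv k A f g x = LinearMap.mul' k A (TensorProduct.map f g (Coalgebra.comul x)) :=
  rfl

lemma comul_eq_redComul_add (x : A) :
    Coalgebra.comul (R := k) x = redComul k A x + 1 ⊗ₜ[k] x + x ⊗ₜ[k] 1 := by
  simp only [redComul, LinearMap.sub_apply, TensorProduct.mk_apply, LinearMap.flip_apply]
  abel

lemma conv_apply_eq_redComul {f g : A →ₗ[k] A} (hf : f 1 = 0) (hg : g 1 = 0) (x : A) :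
    conv k A f g x = LinearMap.mul' k A (TensorProduct.map f g (redComul k A x)) := by
  simp [conv_apply, comul_eq_redComul_add, hf, hg]

lemma conv_apply_one (f g : A →ₗ[k] A) : conv k A f g 1 = f 1 * g 1 := by
  simp only [conv_apply, Bialgebra.comul_one, Algebra.TensorProduct.one_def, map_tmul,
    LinearMap.mul'_apply]

lemma augProj_one : augProj k A 1 = 0 := by
  simp [augProj, Bialgebra.counit_one]

lemma sigmaMap_one : sigmaMap k A 1 = 0 := by
  rw [sigmaMap, conv_apply_one, augProj_one, mul_zero]

lemma sigmaPow_succ_one (j : ℕ) : sigmaPow k A (j + 1) 1 = 0 := by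
  rw [sigmaPow, conv_apply_one, sigmaMap_one, zero_mul]

theorem ker_DIter_le_ker_sigmaPow_succ (n : ℕ) :
    LinearMap.ker (DIter k A n) ≤ LinearMap.ker (sigmaPow k A (n + 1)) := by
  induction n with
  | zero =>
    intro x hx
    rw [LinearMap.mem_ker, DIter, LinearEquiv.coe_coe, LinearEquiv.map_eq_zero_iff] at hx
    simp [hx]
  | succ n ih =>
    intro x hx
    rw [LinearMap.mem_ker, DIter, LinearMap.comp_apply, LinearEquiv.coe_coe,
      LinearEquiv.map_eq_zero_iff] at hx
    have h_map :
        TensorProduct.map (sigmaMap k A) (sigmaPow k A (n + 1)) (redComul k A x) = 0 :=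
      TensorProduct.ker_lTensor_le_ker_map ih (sigmaMap k A) hx
    rw [LinearMap.mem_ker, sigmaPow, conv_apply_eq_redComul sigmaMap_one
      (sigmaPow_succ_one n), h_map, map_zero]

theorem sigmaPow_succ_eq_zero_of_coradical
    (n : ℕ) (x : H) (hx : DIter K H n x = 0) :
    sigmaPow K H (n + 1) x = 0 :=
  ker_DIter_le_ker_sigmaPow_succ n hx
end

section
/- In a graded connected commutative Hopf algebra H, the identity map on the augmentation ideal equals the sum over j ≥ 1 of the convolution powers σ^{⋆j} of σ = S ⋆ P, where the sum terminates on any element of finite degree: for every x in the augmentation ideal, x = Σ_{j=1}^∞ σ^{⋆j}(x) with only finitely many nonzero terms. -/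
/-! In the convolution algebra of `H`, `σ = S ⋆ (id - ηε) = ηε - S`, so `ηε - σ = S` is the
convolution inverse of `id` and the geometric series gives
`Σ_{j<N} σ^{⋆j} = id ⋆ (ηε - σ^{⋆N}) = id - id ⋆ σ^{⋆N}`.
Since `S` fixes `H₀ = k`, `σ` kills `H₀`; as the coproduct respects the grading, `σ^{⋆j}` and
`id ⋆ σ^{⋆j}` then kill `Hₙ` for `n < j`. Choosing `N` above the degrees of `x` removes the
remainder, and `σ^{⋆0} x = ε(x) = 0` on the augmentation ideal. -/

open TensorProduct

variable (K : Type*) [Field K] [CharZero K]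
variable (H : Type*) [CommRing H] [HopfAlgebra K H]

variable (𝒜 : ℕ → Submodule K H)

open WithConv

section VanishesBelow

variable {R M M₂ : Type*} [CommSemiring R] [AddCommMonoid M] [Module R M]
  [AddCommMonoid M₂] [Module R M₂] {𝒢 : ℕ → Submodule R M}

def VanishesBelow (𝒢 : ℕ → Submodule R M) (f : M →ₗ[R] M₂) (m : ℕ) : Prop :=
  ∀ n < m, 𝒢 n ≤ LinearMap.ker f

lemma vanishesBelow_zero (f : M →ₗ[R] M₂) : VanishesBelow 𝒢 f 0 :=
  fun _ hn => absurd hn (Nat.not_lt_zero _)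

lemma VanishesBelow.mono {f : M →ₗ[R] M₂} {m m' : ℕ} (hf : VanishesBelow 𝒢 f m) (h : m' ≤ m) :
    VanishesBelow 𝒢 f m' :=
  fun n hn => hf n (hn.trans_le h)

lemma exists_forall_vanishesBelow_apply_eq_zero [DirectSum.Decomposition 𝒢] (x : M) :
    ∃ m, ∀ f : M →ₗ[R] M₂, VanishesBelow 𝒢 f m → f x = 0 := by
  classical
  refine ⟨(DirectSum.decompose 𝒢 x).support.sup id + 1, fun f hf => ?_⟩
  rw [← DirectSum.sum_support_decompose 𝒢 x, map_sum]
  refine Finset.sum_eq_zero fun n hn => hf n ?_ (SetLike.coe_mem _)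
  exact Nat.lt_succ_of_le (Finset.le_sup (f := id) hn)

end VanishesBelow

section Convolution

variable {R A : Type*} [Field R] [CommRing A] [HopfAlgebra R A]

lemma toConv_conv (f g : A →ₗ[R] A) : toConv (conv R A f g) = toConv f * toConv g := rfl

lemma toConv_sigmaMap : toConv (sigmaMap R A) = 1 - toConv (HopfAlgebra.antipode R) := by
  rw [sigmaMap, toConv_conv, augProj, toConv_sub, ← LinearMap.convOne_def, mul_sub,
    LinearMap.antipode_mul_id, mul_one]

lemma toConv_sigmaPow (j : ℕ) : toConv (sigmaPow R A j) = toConv (sigmaMap R A) ^ j := by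
  induction j with
  | zero => rfl
  | succ j ih => rw [pow_succ', ← ih]; rfl

lemma sum_range_sigmaPow (n : ℕ) :
    ∑ j ∈ Finset.range n, sigmaPow R A j =
      LinearMap.id - conv R A LinearMap.id (sigmaPow R A n) := by
  apply toConv_injective
  have hS : toConv (HopfAlgebra.antipode R) = 1 - toConv (sigmaMap R A) := by
    rw [toConv_sigmaMap, sub_sub_cancel]
  set σ := toConv (sigmaMap R A)
  simp only [toConv_sum, toConv_sub, toConv_conv, toConv_sigmaPow]
  calc ∑ j ∈ Finset.range n, σ ^ j
      = toConv LinearMap.id * toConv (HopfAlgebra.antipode R) * ∑ j ∈ Finset.range n, σ ^ j := by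
        rw [LinearMap.id_mul_antipode, one_mul]
    _ = toConv LinearMap.id * (1 - σ ^ n) := by rw [hS, mul_assoc, mul_neg_geom_sum]
    _ = toConv LinearMap.id - toConv LinearMap.id * σ ^ n := by rw [mul_sub, mul_one]

variable {𝒢 : ℕ → Submodule R A}

lemma VanishesBelow.convMul {B : Type*} [Semiring B] [Algebra R B] (hgr : ComulGraded R A 𝒢)
    {f g : WithConv (A →ₗ[R] B)} {a b : ℕ} (hf : VanishesBelow 𝒢 f.ofConv a)
    (hg : VanishesBelow 𝒢 g.ofConv b) : VanishesBelow 𝒢 (f * g).ofConv (a + b) := by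
  intro n hn x hx
  suffices h : (⨆ pq : {pq : ℕ × ℕ // pq.1 + pq.2 = n},
      LinearMap.range (TensorProduct.map (𝒢 pq.1.1).subtype (𝒢 pq.1.2).subtype)) ≤
        LinearMap.ker (LinearMap.mul' R B ∘ₗ TensorProduct.map f.ofConv g.ofConv) from
    h (hgr n x hx)
  refine iSup_le fun ⟨⟨p, q⟩, hpq⟩ => ?_
  rw [LinearMap.range_le_ker_iff, LinearMap.comp_assoc, ← TensorProduct.map_comp]
  rcases lt_or_ge p a with hp | hq
  · rw [LinearMap.le_ker_iff_comp_subtype_eq_zero.mp (hf p hp), TensorProduct.map_zero_left,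
      LinearMap.comp_zero]
  · rw [LinearMap.le_ker_iff_comp_subtype_eq_zero.mp (hg q (by omega)),
      TensorProduct.map_zero_right, LinearMap.comp_zero]

lemma sigmaMap_vanishesBelow_one (hconn : 𝒢 0 = 1) : VanishesBelow 𝒢 (sigmaMap R A) 1 := by
  intro n hn x hx
  obtain rfl : n = 0 := Nat.lt_one_iff.mp hn
  rw [hconn, Submodule.mem_one] at hx
  obtain ⟨c, rfl⟩ := hx
  rw [LinearMap.mem_ker, ← ofConv_toConv (sigmaMap R A), toConv_sigmaMap]
  simp [Algebra.algebraMap_eq_smul_one]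

lemma sigmaPow_vanishesBelow (hconn : 𝒢 0 = 1) (hgr : ComulGraded R A 𝒢) (j : ℕ) :
    VanishesBelow 𝒢 (sigmaPow R A j) j := by
  induction j with
  | zero => exact vanishesBelow_zero _
  | succ j ih =>
    exact ((sigmaMap_vanishesBelow_one hconn).convMul hgr ih).mono (by omega)

end Convolution

/-- In a graded connected commutative Hopf algebra, the identity map on the augmentation ideal
equals the sum over `j ≥ 1` of the convolution powers `σ^{⋆j}` of `σ = S ⋆ P`: for every
`x` in the augmentation ideal, `x = Σ_{j=1}^∞ σ^{⋆j}(x)`, the sum terminating (all terms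
with `j ≥ N` vanish for some `N`). -/
theorem augmentation_ideal_eq_sum_sigmaPow
    [GradedAlgebra 𝒜] (hconn : 𝒜 0 = 1) (hgr : ComulGraded K H 𝒜)
    (x : H) (hx : Coalgebra.counit (R := K) x = 0) :
    ∃ N : ℕ, (∀ j, N ≤ j → sigmaPow K H j x = 0) ∧
      x = ∑ j ∈ Finset.Ico 1 N, sigmaPow K H j x := by
  obtain ⟨N, hN⟩ := exists_forall_vanishesBelow_apply_eq_zero (M₂ := H) (𝒢 := 𝒜) x
  have hpow := sigmaPow_vanishesBelow hconn hgr
  refine ⟨N, fun j hj => hN _ ((hpow j).mono hj), ?_⟩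
  have hrem : conv K H LinearMap.id (sigmaPow K H N) x = 0 :=
    hN _ (((vanishesBelow_zero _).convMul hgr (hpow N)).mono (Nat.le_add_left N 0))
  have hzero : sigmaPow K H 0 x = 0 := by simp [sigmaPow, hx]
  calc x = ∑ j ∈ Finset.range N, sigmaPow K H j x := by
        rw [← LinearMap.sum_apply, sum_range_sigmaPow, LinearMap.sub_apply, hrem, sub_zero,
          LinearMap.id_apply]
    _ = ∑ j ∈ Finset.Ico 1 N, sigmaPow K H j x := by
        refine (Finset.sum_subset (fun j hj => ?_) fun j _ hj => ?_).symm
        · exact Finset.mem_range.mpr (Finset.mem_Ico.mp hj).2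
        · obtain rfl : j = 0 := by simp_all
          exact hzero
end

section
/- Let G be a connected graph and γ = ∪_i γ_i a subgraph which is a disjoint union of subgraphs. Then the first Symanzik (Kirchhoff) polynomial satisfies ψ_G = ψ_{G/γ} · ψ_γ + R, where ψ_γ = Π_i ψ_{γ_i}, G/γ is the contraction of γ in G, and R is a polynomial whose degree in the Schwinger parameters of the edges of γ is strictly greater than the loop number h_γ = deg ψ_γ. Consequently the order of vanishing of ψ_G along the locus where all edge variables of γ vanish equals h_γ. -/
open MvPolynomial

/-- A (multi)graph with vertex type `V` and labelled edge type `E`; each edge has two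
(not necessarily distinct) endpoints. -/
structure FeynGraph where
  V : Type
  E : Type
  src : E → V
  tgt : E → V

namespace FeynGraph

variable (G : FeynGraph)

/-- One step along an edge belonging to the edge set `F`. -/
def Step (F : Set G.E) (u v : G.V) : Prop :=
  ∃ e ∈ F, (G.src e = u ∧ G.tgt e = v) ∨ (G.src e = v ∧ G.tgt e = u)

/-- `u` and `v` are joined by a walk using only edges in `F`. -/
def Conn (F : Set G.E) (u v : G.V) : Prop :=
  Relation.ReflTransGen (G.Step F) u v

/-- The number of connected components of the spanning subgraph with edge set `F`
(on the full vertex set of `G`). -/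
noncomputable def ncomp (F : Set G.E) : ℕ :=
  Nat.card (Quot (G.Conn F))

/-- `G` is connected. -/
def IsConnected : Prop := ∀ u v : G.V, G.Conn Set.univ u v

/-- The loop number (first Betti number) `h = |F| + c(F) - |V|` of the spanning subgraph
with edge set `F`. -/
noncomputable def loops (F : Set G.E) : ℕ :=
  Nat.card F + G.ncomp F - Nat.card G.V

/-- A maximal spanning forest: an edge set inducing the same connectivity relation as the
whole graph, of cardinality `|V| - c(G)` (hence acyclic, one spanning tree in each
connected component; a spanning tree when `G` is connected). -/
def IsSpanningForest (T : Finset G.E) : Prop :=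
  (∀ u v : G.V, G.Conn ↑T u v ↔ G.Conn Set.univ u v) ∧
    T.card + G.ncomp Set.univ = Nat.card G.V

open Classical in
/-- The first Symanzik (Kirchhoff) polynomial `ψ_G = Σ_T Π_{e ∉ T} A_e`, the sum being
over maximal spanning forests (spanning trees, for `G` connected); for a disjoint union
this is the product of the graph polynomials of the components. -/
noncomputable def psi [Finite G.E] : MvPolynomial G.E ℝ :=
  letI := Fintype.ofFinite G.E
  ∑ T : Finset G.E, if G.IsSpanningForest T then ∏ e ∈ Tᶜ, X e else 0

/-- The subgraph of `G` with edge set `F` (on the full vertex set). -/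
def restrict (F : Set G.E) : FeynGraph where
  V := G.V
  E := {e : G.E // e ∈ F}
  src := fun e => G.src e.1
  tgt := fun e => G.tgt e.1

/-- The contraction `G/F`: every edge of `F` is contracted to a point. -/
def contract (F : Set G.E) : FeynGraph where
  V := Quot (G.Conn F)
  E := {e : G.E // e ∉ F}
  src := fun e => Quot.mk _ (G.src e.1)
  tgt := fun e => Quot.mk _ (G.tgt e.1)

/-- The graph `G•` obtained from `G` by identifying the two vertices `v₁` and `v₂`. -/
def ident (v₁ v₂ : G.V) : FeynGraph where
  V := Quot (fun a b : G.V => a = v₁ ∧ b = v₂)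
  E := G.E
  src := fun e => Quot.mk _ (G.src e)
  tgt := fun e => Quot.mk _ (G.tgt e)

/-- The graph `Ḡ` obtained from `G` by adding a new edge joining `v₁` and `v₂`
(the new edge being labelled `none`). -/
def addEdge (v₁ v₂ : G.V) : FeynGraph where
  V := G.V
  E := Option G.E
  src := fun e => e.elim v₁ G.src
  tgt := fun e => e.elim v₂ G.tgt


instance [Finite G.E] (F : Set G.E) : Finite (G.restrict F).E :=
  inferInstanceAs (Finite {e : G.E // e ∈ F})

instance [Finite G.E] (F : Set G.E) : Finite (G.contract F).E :=
  inferInstanceAs (Finite {e : G.E // e ∉ F})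

instance [Finite G.V] (F : Set G.E) : Finite (G.contract F).V :=
  inferInstanceAs (Finite (Quot (G.Conn F)))

instance [Finite G.E] (v₁ v₂ : G.V) : Finite (G.ident v₁ v₂).E :=
  inferInstanceAs (Finite G.E)

instance [Finite G.V] (v₁ v₂ : G.V) : Finite (G.ident v₁ v₂).V :=
  inferInstanceAs (Finite (Quot _))

instance [Finite G.E] (v₁ v₂ : G.V) : Finite (G.addEdge v₁ v₂).E :=
  letI := Fintype.ofFinite G.E
  inferInstanceAs (Finite (Option G.E))

instance [Finite G.V] (v₁ v₂ : G.V) : Finite (G.addEdge v₁ v₂).V :=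
  inferInstanceAs (Finite G.V)

end FeynGraph

/-!
Every spanning forest `T` of `G` meets `γ` in a forest, so `|T ∩ γ| ≤ |V| - c(γ)` and the
monomial `∏_{e ∉ T} A_e` has degree `|γ \ T| ≥ |γ| + c(γ) - |V| = h_γ` in the edge variables
of `γ`. Equality holds exactly when `T ∩ γ` is a spanning forest of `γ`, and then `T \ γ` is a
spanning forest of `G/γ`; conversely, a spanning forest of `γ` and one of `G/γ` together form a
spanning forest of `G`. So `ψ_{G/γ} ψ_γ` is the part of `ψ_G` of `γ`-degree exactly `h_γ`, and
`R` is the rest. Extending a spanning forest of `γ` to one of `G` shows that this part is nonzero.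
-/

namespace Finset

variable {σ : Type*} [DecidableEq σ] {p : σ → Prop} [DecidablePred p]
  (A : Finset {x // p x}) (B : Finset {x // ¬ p x})

theorem subtype_map_union_map_left :
    (A.map (Function.Embedding.subtype _) ∪ B.map (Function.Embedding.subtype _)).subtype p =
      A := by
  ext x
  simp [x.2]

theorem subtype_map_union_map_right :
    (A.map (Function.Embedding.subtype _) ∪ B.map (Function.Embedding.subtype _)).subtype
      (¬ p ·) = B := by
  ext x
  simp [x.2]

theorem map_subtype_union_map_subtype_not (T : Finset σ) :
    (T.subtype p).map (Function.Embedding.subtype _) ∪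
      (T.subtype (¬ p ·)).map (Function.Embedding.subtype _) = T := by
  rw [subtype_map, subtype_map, filter_union_filter_not_eq]

theorem prod_map_compl_mul_prod_map_compl [Fintype σ] [Fintype {x // p x}]
    [Fintype {x // ¬ p x}] [DecidableEq {x // p x}] [DecidableEq {x // ¬ p x}]
    {M : Type*} [CommMonoid M] (f : σ → M) :
    (∏ e ∈ Aᶜ.map (Function.Embedding.subtype _), f e) *
        ∏ e ∈ Bᶜ.map (Function.Embedding.subtype _), f e =
      ∏ e ∈ (A.map (Function.Embedding.subtype _) ∪ B.map (Function.Embedding.subtype _))ᶜ,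
        f e := by
  have hdisj : Disjoint (Aᶜ.map (Function.Embedding.subtype _))
      (Bᶜ.map (Function.Embedding.subtype _)) :=
    disjoint_left.2 fun _ ha hb =>
      property_of_mem_map_subtype _ hb (property_of_mem_map_subtype _ ha)
  rw [← prod_union hdisj]
  congr 1
  ext e
  by_cases he : p e <;> simp [he]

end Finset

section Monomial

variable {σ R : Type*} [CommSemiring R]

theorem prod_X_eq_monomial (s : Finset σ) :
    ∏ e ∈ s, (X e : MvPolynomial σ R) = monomial (∑ e ∈ s, Finsupp.single e 1) 1 :=
  (monomial_sum_one s _).symm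

variable [DecidableEq σ]

theorem sum_single_one_apply (s : Finset σ) (e : σ) :
    (∑ x ∈ s, Finsupp.single x 1 : σ →₀ ℕ) e = if e ∈ s then 1 else 0 := by
  simp [Finsupp.finsetSum_apply, Finsupp.single_apply]

theorem sum_single_one_injective :
    Function.Injective fun s : Finset σ => (∑ x ∈ s, Finsupp.single x 1 : σ →₀ ℕ) := by
  intro s t h
  ext e
  have he := DFunLike.congr_fun h e
  simp only [sum_single_one_apply] at he
  split_ifs at he <;> simp_all

theorem sum_sum_single_one_compl_apply [Fintype σ] (γ T : Finset σ) :
    ∑ e ∈ γ, (∑ x ∈ Tᶜ, Finsupp.single x 1 : σ →₀ ℕ) e = (γ \ T).card := by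
  simp only [sum_single_one_apply, Finset.sum_boole, Nat.cast_id, Finset.filter_mem_eq_inter,
    Finset.sdiff_eq_inter_compl]

theorem support_sum_prod_X [Nontrivial R] {ι : Type*} (S : Finset ι) {f : ι → Finset σ}
    (hf : Function.Injective f) :
    (∑ i ∈ S, ∏ e ∈ f i, (X e : MvPolynomial σ R)).support =
      S.image fun i => ∑ e ∈ f i, Finsupp.single e 1 := by
  have hg : Function.Injective fun i => ∑ e ∈ f i, Finsupp.single e 1 :=
    sum_single_one_injective.comp hf
  ext m
  simp_rw [mem_support_iff, coeff_sum, prod_X_eq_monomial, coeff_monomial, Finset.mem_image]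
  constructor
  · intro h
    by_contra! hm
    exact h (Finset.sum_eq_zero fun i hi => if_neg (hm i hi))
  · rintro ⟨i, hi, rfl⟩
    rw [Finset.sum_eq_single_of_mem i hi fun j _ hj => if_neg (hg.ne hj), if_pos rfl]
    exact one_ne_zero

end Monomial

namespace FeynGraph

variable {G : FeynGraph} {F F' : Set G.E} {u v : G.V}

theorem conn_equivalence (F : Set G.E) : Equivalence (G.Conn F) :=
  ⟨fun _ => .refl, fun h => (@Relation.ReflTransGen.stdSymm _ (G.Step F)
    ⟨fun _ _ ⟨e, he, h⟩ => ⟨e, he, h.symm⟩⟩).symm _ _ h, .trans⟩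

theorem conn_of_mem {e : G.E} (he : e ∈ F) : G.Conn F (G.src e) (G.tgt e) :=
  .single ⟨e, he, .inl ⟨rfl, rfl⟩⟩

theorem mk_eq_mk_iff_conn :
    Quot.mk (G.Conn F) u = Quot.mk (G.Conn F) v ↔ G.Conn F u v :=
  ⟨fun h => (conn_equivalence F).eqvGen_iff.1 (Quot.eqvGen_exact h), Quot.sound⟩

theorem conn_mono (h : F ⊆ F') (hc : G.Conn F u v) : G.Conn F' u v :=
  Relation.ReflTransGen.mono (fun _ _ ⟨e, he, p⟩ => ⟨e, h he, p⟩) _ _ hc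

theorem eq_of_conn {β : Sort*} (f : G.V → β)
    (hf : ∀ e ∈ F, f (G.src e) = f (G.tgt e)) (hc : G.Conn F u v) : f u = f v := by
  induction hc with
  | refl => rfl
  | tail _ hs ih =>
    obtain ⟨e, he, ⟨rfl, rfl⟩ | ⟨rfl, rfl⟩⟩ := hs
    exacts [ih.trans (hf e he), ih.trans (hf e he).symm]

theorem conn_of_forall_conn (h : ∀ e ∈ F', G.Conn F (G.src e) (G.tgt e))
    (hc : G.Conn F' u v) : G.Conn F u v :=
  mk_eq_mk_iff_conn.1 <| eq_of_conn (Quot.mk _) (fun e he => mk_eq_mk_iff_conn.2 (h e he)) hc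

theorem quot_map_surjective (h : F ⊆ F') :
    Function.Surjective (Quot.map id fun _ _ => conn_mono (G := G) h) :=
  Quot.ind fun v => ⟨Quot.mk _ v, rfl⟩

theorem ncomp_anti [Finite G.V] (h : F ⊆ F') : G.ncomp F' ≤ G.ncomp F :=
  Nat.card_le_card_of_surjective _ (quot_map_surjective h)

theorem conn_of_ncomp_eq [Finite G.V] (h : F ⊆ F') (hc : G.ncomp F = G.ncomp F')
    (huv : G.Conn F' u v) : G.Conn F u v := by
  have hbij := (Nat.bijective_iff_surjective_and_card _).2 ⟨quot_map_surjective h, hc⟩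
  exact mk_eq_mk_iff_conn.1 (hbij.injective (mk_eq_mk_iff_conn.2 huv))

theorem ncomp_empty [Finite G.V] : G.ncomp ∅ = Nat.card G.V := by
  refine (Nat.card_eq_of_bijective _ ⟨fun x y hxy => ?_, Quot.mk_surjective⟩).symm
  exact eq_of_conn id (fun _ he => he.elim) (mk_eq_mk_iff_conn.1 hxy)

theorem ncomp_le_ncomp_insert_add_one [Finite G.V] (e : G.E) (F : Set G.E) :
    G.ncomp F ≤ G.ncomp (insert e F) + 1 := by
  classical
  set t : Quot (G.Conn F) := Quot.mk _ (G.tgt e)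
  -- adding `e` merges at most the classes of `src e` and `tgt e`, so `merge` is constant on
  -- the components of `insert e F`
  let merge (x : Quot (G.Conn F)) : Quot (G.Conn F) := if x = t then Quot.mk _ (G.src e) else x
  have hmerge {a b : G.V} (h : G.Conn (insert e F) a b) :
      merge (Quot.mk _ a) = merge (Quot.mk _ b) := by
    refine eq_of_conn (merge ∘ Quot.mk _) (fun f hf => ?_) h
    rcases hf with rfl | hf
    · simp [merge, t]
    · simp only [Function.comp_apply, mk_eq_mk_iff_conn.2 (conn_of_mem hf)]
  let φ (x : Quot (G.Conn F)) : Option (Quot (G.Conn (insert e F))) :=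
    if x = t then none else some (Quot.map id (fun _ _ => conn_mono (Set.subset_insert e F)) x)
  have hφ : Function.Injective φ := by
    intro x y hxy
    induction x using Quot.ind with | _ a =>
    induction y using Quot.ind with | _ b =>
    by_cases ha : Quot.mk _ a = t <;> by_cases hb : Quot.mk _ b = t <;>
      simp only [φ, ha, hb, if_true, if_false, reduceCtorEq, Option.some.injEq] at hxy
    · exact ha.trans hb.symm
    · simpa [merge, ha, hb] using hmerge (mk_eq_mk_iff_conn.1 hxy)
  calc G.ncomp F ≤ Nat.card (Option (Quot (G.Conn (insert e F)))) :=
        Nat.card_le_card_of_injective φ hφ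
    _ = G.ncomp (insert e F) + 1 := Finite.card_option

theorem ncomp_insert_lt [Finite G.V] {e : G.E} (h : ¬ G.Conn F (G.src e) (G.tgt e)) :
    G.ncomp (insert e F) < G.ncomp F :=
  (ncomp_anti (Set.subset_insert e F)).lt_of_ne fun hc =>
    h (conn_of_ncomp_eq (Set.subset_insert e F) hc.symm (conn_of_mem (Set.mem_insert e F)))

theorem ncomp_congr (h : ∀ u v, G.Conn F u v ↔ G.Conn F' u v) : G.ncomp F = G.ncomp F' := by
  unfold ncomp
  rw [show G.Conn F = G.Conn F' from funext₂ fun u v => propext (h u v)]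

theorem ncomp_le_ncomp_union_add_card [Finite G.V] (F : Set G.E) (D : Finset G.E) :
    G.ncomp F ≤ G.ncomp (F ∪ D) + D.card := by
  classical
  induction D using Finset.induction_on with
  | empty => simp
  | insert e D he ih =>
    have := ncomp_le_ncomp_insert_add_one e (F ∪ D)
    rw [Finset.coe_insert, Set.union_insert, Finset.card_insert_of_notMem he]
    omega

theorem card_le_card_add_ncomp [Finite G.V] (T : Finset G.E) :
    Nat.card G.V ≤ T.card + G.ncomp T := by
  simpa [ncomp_empty, add_comm] using ncomp_le_ncomp_union_add_card ∅ T

variable (G) in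
/-- Acyclicity: every edge set satisfies `|T| + c(T) ≥ |V|`, with equality iff it has no cycle. -/
def IsForest (T : Finset G.E) : Prop := T.card + G.ncomp T = Nat.card G.V

variable (G) in
/-- `IsSpanningForest` is the case `F = Set.univ`, definitionally. -/
def IsSpanningForestOf (F : Set G.E) (T : Finset G.E) : Prop :=
  (∀ u v, G.Conn T u v ↔ G.Conn F u v) ∧ T.card + G.ncomp F = Nat.card G.V

variable {S T : Finset G.E}

theorem IsSpanningForestOf.isForest (hT : G.IsSpanningForestOf F T) : G.IsForest T := by
  unfold IsForest
  rw [ncomp_congr hT.1]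
  exact hT.2

theorem isForest_empty [Finite G.V] : G.IsForest ∅ := by
  simp [IsForest, ncomp_empty]

theorem IsForest.subset [Finite G.V] (hT : G.IsForest T) (hST : S ⊆ T) : G.IsForest S := by
  classical
  have hle := ncomp_le_ncomp_union_add_card (S : Set G.E) (T \ S)
  rw [Finset.coe_sdiff, Set.union_sdiff_cancel (Finset.coe_subset.2 hST),
    Finset.card_sdiff_of_subset hST] at hle
  have := card_le_card_add_ncomp S
  have := Finset.card_le_card hST
  unfold IsForest at hT ⊢
  omega

theorem IsForest.card_add_ncomp_le [Finite G.V] (hT : G.IsForest T) (hTF : ↑T ⊆ F) :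
    T.card + G.ncomp F ≤ Nat.card G.V :=
  hT ▸ Nat.add_le_add_left (ncomp_anti hTF) _

theorem IsForest.isSpanningForestOf [Finite G.V] (hT : G.IsForest T) (hTF : ↑T ⊆ F)
    (h : T.card + G.ncomp F = Nat.card G.V) : G.IsSpanningForestOf F T := by
  have hc : G.ncomp T = G.ncomp F := by unfold IsForest at hT; omega
  exact ⟨fun u v => ⟨conn_mono hTF, conn_of_ncomp_eq hTF hc⟩, h⟩

theorem IsForest.insert_of_not_conn [Finite G.V] [DecidableEq G.E] (hT : G.IsForest T) {e : G.E}
    (h : ¬ G.Conn T (G.src e) (G.tgt e)) : G.IsForest (insert e T) := by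
  have he : e ∉ T := fun he => h (conn_of_mem he)
  have := ncomp_insert_lt h
  have := ncomp_le_ncomp_insert_add_one e T
  unfold IsForest at hT ⊢
  rw [Finset.card_insert_of_notMem he, Finset.coe_insert]
  omega

/-- Take a largest forest between `S` and `F`: by maximality, every edge of `F` joins two
vertices already connected in it. -/
theorem IsForest.exists_isSpanningForestOf [Finite G.V] (hS : G.IsForest S) {F : Finset G.E}
    (hSF : S ⊆ F) : ∃ T, S ⊆ T ∧ T ⊆ F ∧ G.IsSpanningForestOf F T := by
  classical
  obtain ⟨T, hT, hmax⟩ := Finset.exists_max_image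
    (F.powerset.filter fun T => S ⊆ T ∧ G.IsForest T) Finset.card
    ⟨S, Finset.mem_filter.2 ⟨Finset.mem_powerset.2 hSF, subset_rfl, hS⟩⟩
  simp only [Finset.mem_filter, Finset.mem_powerset] at hT hmax
  obtain ⟨hTF, hST, hT⟩ := hT
  have hspan : ∀ e ∈ (F : Set G.E), G.Conn T (G.src e) (G.tgt e) := by
    intro e he
    by_contra h
    have hle := hmax (insert e T) ⟨Finset.insert_subset he hTF,
      hST.trans (Finset.subset_insert e T), hT.insert_of_not_conn h⟩
    rw [Finset.card_insert_of_notMem fun he => h (conn_of_mem he)] at hle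
    omega
  have hconn : ∀ u v, G.Conn T u v ↔ G.Conn F u v := fun u v =>
    ⟨conn_mono (Finset.coe_subset.2 hTF), conn_of_forall_conn hspan⟩
  exact ⟨T, hST, hTF, hconn, ncomp_congr hconn ▸ hT⟩

section Transfer

variable (F : Set G.E)

theorem restrict_step (S : Set (G.restrict F).E) :
    (G.restrict F).Step S = G.Step (Subtype.val '' S) := by
  ext u v
  exact ⟨fun ⟨e, he, h⟩ => ⟨e.1, ⟨e, he, rfl⟩, h⟩, fun ⟨_, ⟨e, he, rfl⟩, h⟩ => ⟨e, he, h⟩⟩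

theorem restrict_conn (S : Set (G.restrict F).E) :
    (G.restrict F).Conn S = G.Conn (Subtype.val '' S) := by
  unfold Conn
  rw [restrict_step]
  rfl

theorem restrict_ncomp (S : Set (G.restrict F).E) :
    (G.restrict F).ncomp S = G.ncomp (Subtype.val '' S) := by
  unfold ncomp
  rw [restrict_conn]
  rfl

theorem restrict_isSpanningForest_iff (T : Finset (G.restrict F).E) :
    (G.restrict F).IsSpanningForest T ↔
      G.IsSpanningForestOf F (T.map (Function.Embedding.subtype _)) := by
  have hF : Subtype.val '' (Set.univ : Set (G.restrict F).E) = F := Subtype.coe_image_univ F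
  unfold IsSpanningForest IsSpanningForestOf
  have hT : Subtype.val '' (T : Set (G.restrict F).E) = ↑(T.map (Function.Embedding.subtype _)) :=
    (Finset.coe_map (Function.Embedding.subtype fun e => e ∈ F) T).symm
  have hc : (T.map (Function.Embedding.subtype fun e => e ∈ F)).card = T.card :=
    Finset.card_map _
  rw [restrict_ncomp, restrict_conn, restrict_conn, hF, hT, hc]
  rfl

theorem contract_conn_mk_iff (S : Set (G.contract F).E) (u v : G.V) :
    (G.contract F).Conn S (Quot.mk _ u) (Quot.mk _ v) ↔ G.Conn (F ∪ Subtype.val '' S) u v := by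
  constructor
  · intro h
    refine mk_eq_mk_iff_conn.1 (eq_of_conn (G := G.contract F)
      (Quot.lift (Quot.mk (G.Conn (F ∪ Subtype.val '' S)))
        fun _ _ => mk_eq_mk_iff_conn.2 ∘ conn_mono Set.subset_union_left)
      (fun e he => mk_eq_mk_iff_conn.2 (conn_of_mem (Or.inr ⟨e, he, rfl⟩))) h)
  · intro h
    refine mk_eq_mk_iff_conn.1
      (eq_of_conn (fun w => Quot.mk ((G.contract F).Conn S) (Quot.mk (G.Conn F) w)) ?_ h)
    rintro e (he | ⟨e, he, rfl⟩)
    · simp only [mk_eq_mk_iff_conn.2 (conn_of_mem he)]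
    · exact mk_eq_mk_iff_conn.2 (conn_of_mem (G := G.contract F) he)

theorem contract_ncomp (S : Set (G.contract F).E) :
    (G.contract F).ncomp S = G.ncomp (F ∪ Subtype.val '' S) := by
  let φ : Quot (G.Conn (F ∪ Subtype.val '' S)) → Quot ((G.contract F).Conn S) :=
    Quot.lift (fun w => Quot.mk _ (Quot.mk _ w))
      fun _ _ h => mk_eq_mk_iff_conn.2 ((contract_conn_mk_iff F S _ _).2 h)
  refine (Nat.card_eq_of_bijective φ ⟨fun x y hxy => ?_, fun x => ?_⟩).symm
  · induction x using Quot.ind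
    induction y using Quot.ind
    exact mk_eq_mk_iff_conn.2 ((contract_conn_mk_iff F S _ _).1 (mk_eq_mk_iff_conn.1 hxy))
  · induction x using Quot.ind with | _ x =>
    induction x using Quot.ind with | _ w =>
    exact ⟨Quot.mk _ w, rfl⟩

theorem contract_isSpanningForest_iff (T : Finset (G.contract F).E) :
    (G.contract F).IsSpanningForest T ↔
      (∀ u v, G.Conn (F ∪ ↑(T.map (Function.Embedding.subtype _))) u v ↔ G.Conn Set.univ u v) ∧
        (T.map (Function.Embedding.subtype _)).card + G.ncomp Set.univ = G.ncomp F := by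
  have huniv : F ∪ Subtype.val '' (Set.univ : Set (G.contract F).E) = Set.univ := by
    rw [show Subtype.val '' (Set.univ : Set (G.contract F).E) = Fᶜ from
      Subtype.coe_image_univ _]
    exact Set.union_compl_self F
  have hT : Subtype.val '' (T : Set (G.contract F).E) =
      ↑(T.map (Function.Embedding.subtype fun e => e ∉ F)) :=
    (Finset.coe_map (Function.Embedding.subtype fun e => e ∉ F) T).symm
  have hc : (T.map (Function.Embedding.subtype fun e => e ∉ F)).card = T.card :=
    Finset.card_map _
  unfold IsSpanningForest
  rw [contract_ncomp, huniv, hc]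
  refine and_congr ⟨fun h u v => ?_, fun h x y => ?_⟩ Iff.rfl
  · rw [← hT, ← huniv, ← contract_conn_mk_iff, ← contract_conn_mk_iff]
    exact h _ _
  · induction x using Quot.ind
    induction y using Quot.ind
    rw [contract_conn_mk_iff, contract_conn_mk_iff, hT, huniv]
    exact h _ _

end Transfer

section Subgraph

variable [DecidableEq G.E]

theorem IsSpanningForest.card_inter_add_ncomp_le [Finite G.V] (hT : G.IsSpanningForest T)
    (γ : Finset G.E) :
    (T ∩ γ).card + G.ncomp γ ≤ Nat.card G.V :=
  ((IsSpanningForestOf.isForest hT).subset Finset.inter_subset_left).card_add_ncomp_le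
    (Finset.coe_subset.2 Finset.inter_subset_right)

theorem IsSpanningForest.isSpanningForestOf_inter_iff [Finite G.V] (hT : G.IsSpanningForest T)
    {γ : Finset G.E} :
    G.IsSpanningForestOf γ (T ∩ γ) ↔ (T ∩ γ).card + G.ncomp γ = Nat.card G.V :=
  ⟨And.right,
    ((IsSpanningForestOf.isForest hT).subset Finset.inter_subset_left).isSpanningForestOf
      (Finset.coe_subset.2 Finset.inter_subset_right)⟩

/-- By `contract_isSpanningForest_iff`, the right-hand side says that `T \ γ` is a spanning forest
of `G/γ`. -/
theorem isSpanningForest_iff_of_isSpanningForestOf_inter {γ : Finset G.E}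
    (hγ : G.IsSpanningForestOf γ (T ∩ γ)) :
    G.IsSpanningForest T ↔ (∀ u v, G.Conn (↑γ ∪ ↑(T \ γ)) u v ↔ G.Conn Set.univ u v) ∧
      (T \ γ).card + G.ncomp Set.univ = G.ncomp γ := by
  have hcard : (T ∩ γ).card + (T \ γ).card = T.card := Finset.card_inter_add_card_sdiff T γ
  have hconn (u v : G.V) : G.Conn T u v ↔ G.Conn (↑γ ∪ ↑(T \ γ)) u v := by
    refine ⟨conn_mono fun e he => ?_, conn_of_forall_conn fun e he => ?_⟩
    · by_cases heγ : e ∈ γ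
      exacts [.inl heγ, .inr (Finset.mem_sdiff.2 ⟨he, heγ⟩)]
    · rcases he with heγ | heT
      · exact conn_mono (Finset.coe_subset.2 Finset.inter_subset_left)
          ((hγ.1 _ _).2 (conn_of_mem heγ))
      · exact conn_of_mem (Finset.sdiff_subset heT)
  have hγcard := hγ.2
  unfold IsSpanningForest
  exact ⟨fun h => ⟨fun u v => (hconn u v).symm.trans (h.1 u v), by omega⟩,
    fun h => ⟨fun u v => (hconn u v).trans (h.1 u v), by omega⟩⟩

theorem exists_isSpanningForest_isSpanningForestOf_inter [Finite G.V] [Fintype G.E]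
    (γ : Finset G.E) :
    ∃ T, G.IsSpanningForest T ∧ G.IsSpanningForestOf γ (T ∩ γ) := by
  obtain ⟨S, -, hSγ, hS⟩ := isForest_empty.exists_isSpanningForestOf (Finset.empty_subset γ)
  obtain ⟨T, hST, -, hT⟩ := hS.isForest.exists_isSpanningForestOf (Finset.subset_univ S)
  rw [Finset.coe_univ] at hT
  replace hT : G.IsSpanningForest T := hT
  have hle := Finset.card_le_card (Finset.subset_inter hST hSγ)
  have := hT.card_inter_add_ncomp_le γ
  exact ⟨T, hT, hT.isSpanningForestOf_inter_iff.2 (by have := hS.2; omega)⟩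

end Subgraph

theorem loops_add_card [Finite G.V] (γ : Finset G.E) :
    G.loops γ + Nat.card G.V = γ.card + G.ncomp γ := by
  have := card_le_card_add_ncomp γ
  unfold loops
  rw [Nat.card_coe_set_eq, Set.ncard_coe_finset]
  omega

/-- `|γ \ T|` is the degree of the monomial `∏_{e ∉ T} A_e` in the edge variables of `γ`. -/
theorem IsSpanningForest.loops_le_card_sdiff [Finite G.V] [DecidableEq G.E]
    (hT : G.IsSpanningForest T) (γ : Finset G.E) : G.loops γ ≤ (γ \ T).card := by
  have := loops_add_card γ
  have := hT.card_inter_add_ncomp_le γ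
  have := Finset.card_sdiff_add_card_inter γ T
  rw [Finset.inter_comm] at this
  omega

theorem IsSpanningForest.card_sdiff_eq_loops_iff [Finite G.V] [DecidableEq G.E]
    (hT : G.IsSpanningForest T) (γ : Finset G.E) :
    (γ \ T).card = G.loops γ ↔ G.IsSpanningForestOf γ (T ∩ γ) := by
  have := loops_add_card γ
  have := hT.card_inter_add_ncomp_le γ
  have := Finset.card_sdiff_add_card_inter γ T
  rw [hT.isSpanningForestOf_inter_iff, Finset.inter_comm T γ]
  omega

theorem psi_eq_sum [Fintype G.E] [DecidableEq G.E] [DecidablePred G.IsSpanningForest] :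
    G.psi = ∑ T with G.IsSpanningForest T, ∏ e ∈ Tᶜ, (X e : MvPolynomial G.E ℝ) := by
  rw [psi, Finset.sum_filter]
  congr!

theorem rename_psi_eq_sum [Fintype G.E] [DecidableEq G.E] [DecidablePred G.IsSpanningForest]
    {σ : Type*} (f : G.E ↪ σ) :
    rename f G.psi = ∑ T with G.IsSpanningForest T, ∏ e ∈ Tᶜ.map f, (X e : MvPolynomial σ ℝ) := by
  simp [psi_eq_sum, map_sum, map_prod, Finset.prod_map]

section Factorization

variable [DecidableEq G.E] (γ : Finset G.E)

open Classical in
theorem isSpanningForest_and_isSpanningForestOf_inter_iff (T : Finset G.E) :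
    G.IsSpanningForest T ∧ G.IsSpanningForestOf γ (T ∩ γ) ↔
      (G.restrict γ).IsSpanningForest (T.subtype (· ∈ (γ : Set G.E))) ∧
        (G.contract γ).IsSpanningForest (T.subtype (· ∉ (γ : Set G.E))) := by
  have hinter : (T.subtype (· ∈ (γ : Set G.E))).map (Function.Embedding.subtype _) = T ∩ γ := by
    ext; simp
  have hsdiff : (T.subtype (· ∉ (γ : Set G.E))).map (Function.Embedding.subtype _) = T \ γ := by
    ext; simp
  have hrestrict : (G.restrict γ).IsSpanningForest (T.subtype (· ∈ (γ : Set G.E))) ↔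
      G.IsSpanningForestOf γ (T ∩ γ) :=
    (restrict_isSpanningForest_iff _ _).trans (by rw [hinter])
  have hcontract : (G.contract γ).IsSpanningForest (T.subtype (· ∉ (γ : Set G.E))) ↔
      (∀ u v, G.Conn (↑γ ∪ ↑(T \ γ)) u v ↔ G.Conn Set.univ u v) ∧
        (T \ γ).card + G.ncomp Set.univ = G.ncomp γ :=
    (contract_isSpanningForest_iff _ _).trans (by rw [hsdiff])
  rw [hrestrict, hcontract]
  exact ⟨fun ⟨hT, hγ⟩ => ⟨hγ, (isSpanningForest_iff_of_isSpanningForestOf_inter hγ).1 hT⟩,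
    fun ⟨hγ, h⟩ => ⟨(isSpanningForest_iff_of_isSpanningForestOf_inter hγ).2 h, hγ⟩⟩

open Classical in
theorem rename_psi_contract_mul_rename_psi_restrict [Fintype G.E] :
    rename Subtype.val (G.contract γ).psi * rename Subtype.val (G.restrict γ).psi =
      ∑ T with G.IsSpanningForest T ∧ G.IsSpanningForestOf γ (T ∩ γ),
        ∏ e ∈ Tᶜ, (X e : MvPolynomial G.E ℝ) := by
  -- instances read through the subtypes, so that the `Finset` lemmas on subtypes apply
  let _ : Fintype (G.contract γ).E := inferInstanceAs (Fintype {e // e ∉ (γ : Set G.E)})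
  let _ : Fintype (G.restrict γ).E := inferInstanceAs (Fintype {e // e ∈ (γ : Set G.E)})
  let _ : DecidableEq (G.contract γ).E := inferInstanceAs (DecidableEq {e // e ∉ (γ : Set G.E)})
  let _ : DecidableEq (G.restrict γ).E := inferInstanceAs (DecidableEq {e // e ∈ (γ : Set G.E)})
  have hcontract : rename Subtype.val (G.contract γ).psi =
      ∑ T with (G.contract γ).IsSpanningForest T,
        ∏ e ∈ Tᶜ.map (Function.Embedding.subtype (· ∉ (γ : Set G.E))), (X e : MvPolynomial G.E ℝ) :=
    rename_psi_eq_sum (G := G.contract γ) (Function.Embedding.subtype _)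
  have hrestrict : rename Subtype.val (G.restrict γ).psi =
      ∑ T with (G.restrict γ).IsSpanningForest T,
        ∏ e ∈ Tᶜ.map (Function.Embedding.subtype (· ∈ (γ : Set G.E))), (X e : MvPolynomial G.E ℝ) :=
    rename_psi_eq_sum (G := G.restrict γ) (Function.Embedding.subtype _)
  rw [mul_comm, hcontract, hrestrict, Finset.sum_mul_sum, ← Finset.sum_product']
  refine Finset.sum_nbij'
    (fun p => p.1.map (Function.Embedding.subtype _) ∪ p.2.map (Function.Embedding.subtype _))
    (fun T => (T.subtype (· ∈ (γ : Set G.E)), T.subtype (· ∉ (γ : Set G.E)))) ?_ ?_ ?_ ?_ ?_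
  · rintro ⟨A, B⟩ hAB
    simp only [Finset.mem_product, Finset.mem_filter, Finset.mem_univ, true_and] at hAB ⊢
    rw [isSpanningForest_and_isSpanningForestOf_inter_iff]
    have hA : (A.map (Function.Embedding.subtype (· ∈ (γ : Set G.E))) ∪
        B.map (Function.Embedding.subtype (· ∉ (γ : Set G.E)))).subtype (· ∈ (γ : Set G.E)) = A :=
      Finset.subtype_map_union_map_left A B
    have hB : (A.map (Function.Embedding.subtype (· ∈ (γ : Set G.E))) ∪
        B.map (Function.Embedding.subtype (· ∉ (γ : Set G.E)))).subtype (· ∉ (γ : Set G.E)) = B :=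
      Finset.subtype_map_union_map_right A B
    rw [hA, hB]
    exact hAB
  · intro T hT
    obtain ⟨hA, hB⟩ := (isSpanningForest_and_isSpanningForestOf_inter_iff γ T).1
      (Finset.mem_filter.1 hT).2
    exact Finset.mem_product.2
      ⟨Finset.mem_filter.2 ⟨Finset.mem_univ _, hA⟩, Finset.mem_filter.2 ⟨Finset.mem_univ _, hB⟩⟩
  · rintro ⟨A, B⟩ -
    exact Prod.ext (Finset.subtype_map_union_map_left A B) (Finset.subtype_map_union_map_right A B)
  · intro T _
    exact Finset.map_subtype_union_map_subtype_not T
  · rintro ⟨A, B⟩ -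
    exact Finset.prod_map_compl_mul_prod_map_compl A B (X : G.E → MvPolynomial G.E ℝ)

end Factorization

end FeynGraph

open FeynGraph MvPolynomial in
theorem psi_contraction_deletion_general (G : FeynGraph) [Finite G.V] [Finite G.E]
    (γ : Finset G.E) :
    ∃ R : MvPolynomial G.E ℝ,
      G.psi =
        (rename Subtype.val (FeynGraph.psi (G.contract ↑γ))) *
          (rename Subtype.val (FeynGraph.psi (G.restrict ↑γ))) + R ∧
      (∀ m ∈ R.support, G.loops ↑γ < ∑ e ∈ γ, m e) ∧
      (∀ m ∈ G.psi.support, G.loops ↑γ ≤ ∑ e ∈ γ, m e) ∧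
      (∃ m ∈ G.psi.support, ∑ e ∈ γ, m e = G.loops ↑γ) := by
  classical
  let _ : Fintype G.E := Fintype.ofFinite G.E
  refine ⟨∑ T with G.IsSpanningForest T ∧ ¬ G.IsSpanningForestOf γ (T ∩ γ),
    ∏ e ∈ Tᶜ, X e, ?_, ?_, ?_, ?_⟩
  · rw [psi_eq_sum, rename_psi_contract_mul_rename_psi_restrict,
      ← Finset.sum_filter_add_sum_filter_not _ fun T => G.IsSpanningForestOf γ (T ∩ γ),
      Finset.filter_filter, Finset.filter_filter]
  · intro m hm
    rw [support_sum_prod_X _ compl_injective, Finset.mem_image] at hm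
    obtain ⟨T, hT, rfl⟩ := hm
    obtain ⟨hT, hγ⟩ := (Finset.mem_filter.1 hT).2
    rw [sum_sum_single_one_compl_apply]
    exact (hT.loops_le_card_sdiff γ).lt_of_ne fun h => hγ ((hT.card_sdiff_eq_loops_iff γ).1 h.symm)
  · intro m hm
    rw [psi_eq_sum, support_sum_prod_X _ compl_injective, Finset.mem_image] at hm
    obtain ⟨T, hT, rfl⟩ := hm
    rw [sum_sum_single_one_compl_apply]
    exact (Finset.mem_filter.1 hT).2.loops_le_card_sdiff γ
  · obtain ⟨T, hT, hγ⟩ := exists_isSpanningForest_isSpanningForestOf_inter γ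
    refine ⟨∑ e ∈ Tᶜ, Finsupp.single e 1, ?_, ?_⟩
    · rw [psi_eq_sum, support_sum_prod_X _ compl_injective]
      exact Finset.mem_image_of_mem _ (Finset.mem_filter.2 ⟨Finset.mem_univ _, hT⟩)
    · rw [sum_sum_single_one_compl_apply]
      exact (hT.card_sdiff_eq_loops_iff γ).2 hγ

open FeynGraph MvPolynomial in
/-- For a connected graph `G` and a strict subgraph `γ` (a disjoint union of subgraphs,
given by its edge set), the graph polynomial factorizes as
`ψ_G = ψ_{G/γ} ψ_γ + R`, where every monomial of `R` has degree strictly greater than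
`h_γ = deg ψ_γ` in the edge variables of `γ`.  Consequently the order of vanishing of
`ψ_G` along the locus where the edge variables of `γ` vanish equals `h_γ`: every
monomial of `ψ_G` has `γ`-degree at least `h_γ`, with equality for some monomial. -/
theorem psi_contraction_deletion (G : FeynGraph) [Finite G.V] [Finite G.E]
    (hconn : G.IsConnected) (γ : Finset G.E) (hγ : (γ : Set G.E) ≠ Set.univ) :
    ∃ R : MvPolynomial G.E ℝ,
      G.psi =
        (rename Subtype.val (FeynGraph.psi (G.contract ↑γ))) *
          (rename Subtype.val (FeynGraph.psi (G.restrict ↑γ))) + R ∧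
      (∀ m ∈ R.support, G.loops ↑γ < ∑ e ∈ γ, m e) ∧
      (∀ m ∈ G.psi.support, G.loops ↑γ ≤ ∑ e ∈ γ, m e) ∧
      (∃ m ∈ G.psi.support, ∑ e ∈ γ, m e = G.loops ↑γ) :=
  psi_contraction_deletion_general G γ
end

section
/- Let q₁ ⊊ q₂ be nested connected 1PI quadratically divergent subgraphs (sd = 1) of a φ⁴ graph G. Then no path inside q₁ connects the two 3-valent vertices of q₂; equivalently ε_{q₂}(q₁) = 0. In fact, if q₁ contains both 3-valent vertices of q₂, then q₁ = q₂. -/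
open MvPolynomial

namespace FeynGraph

variable (G : FeynGraph)

open Classical in
/-- The (internal) valency of a vertex in `G` (a self-loop counts twice). -/
noncomputable def degree [Finite G.E] (vv : G.V) : ℕ :=
  letI := Fintype.ofFinite G.E
  (Finset.univ.filter fun e => G.src e = vv).card +
    (Finset.univ.filter fun e => G.tgt e = vv).card

/-- The set of vertices incident to an edge set `F`. -/
def vertexSet (F : Set G.E) : Set G.V :=
  {v | ∃ e ∈ F, G.src e = v ∨ G.tgt e = v}

/-- The subgraph with edge set `F` is connected. -/
def ConnectedOn (F : Set G.E) : Prop :=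
  ∀ u v : G.V, u ∈ G.vertexSet F → v ∈ G.vertexSet F → G.Conn F u v

/-- The valency of a vertex within the subgraph with edge set `F`. -/
noncomputable def degIn (F : Set G.E) (vv : G.V) : ℕ :=
  Nat.card {e : G.E // e ∈ F ∧ G.src e = vv} +
    Nat.card {e : G.E // e ∈ F ∧ G.tgt e = vv}

/-- The superficial degree of divergence `sd = 2h - E` of the connected subgraph with
edge set `F`, with loop number `h = E - V + 1`. -/
noncomputable def sdSub (F : Set G.E) : ℤ :=
  2 * ((Nat.card F : ℤ) + 1 - (Nat.card (G.vertexSet F) : ℤ)) - (Nat.card F : ℤ)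

/-- The subgraph with edge set `F` is connected and 1PI (one-particle irreducible,
i.e. 2-edge-connected: removing any single edge does not disconnect it). -/
def IsOnePIOn (F : Set G.E) : Prop :=
  F.Nonempty ∧ G.ConnectedOn F ∧
    ∀ e ∈ F, ∀ u v : G.V, u ∈ G.vertexSet F → v ∈ G.vertexSet F →
      G.Conn (F \ {e}) u v

/-- A connected 1PI quadratically divergent (`sd = 1`) subgraph. -/
def IsQuadraticSub (F : Set G.E) : Prop :=
  G.IsOnePIOn F ∧ G.sdSub F = 1

end FeynGraph

section AuxLemmas

namespace FeynGraph

variable (G : FeynGraph)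

lemma mem_vertexSet_src' {F : Set G.E} {e : G.E} (he : e ∈ F) :
    G.src e ∈ G.vertexSet F := ⟨e, he, Or.inl rfl⟩

lemma mem_vertexSet_tgt' {F : Set G.E} {e : G.E} (he : e ∈ F) :
    G.tgt e ∈ G.vertexSet F := ⟨e, he, Or.inr rfl⟩

lemma degIn_eq_ncard (F : Set G.E) (v : G.V) :
    G.degIn F v = ({e | e ∈ F ∧ G.src e = v} : Set G.E).ncard
      + ({e | e ∈ F ∧ G.tgt e = v} : Set G.E).ncard := by
  unfold degIn
  rw [← Nat.card_coe_set_eq, ← Nat.card_coe_set_eq]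
  rfl

lemma degIn_of_notMem' {F : Set G.E} {v : G.V} (hv : v ∉ G.vertexSet F) :
    G.degIn F v = 0 := by
  rw [degIn_eq_ncard]
  have h1 : ({e | e ∈ F ∧ G.src e = v} : Set G.E) = ∅ := by
    ext e; simp only [Set.mem_setOf_eq, Set.mem_empty_iff_false, iff_false]
    rintro ⟨he, h⟩; exact hv ⟨e, he, Or.inl h⟩
  have h2 : ({e | e ∈ F ∧ G.tgt e = v} : Set G.E) = ∅ := by
    ext e; simp only [Set.mem_setOf_eq, Set.mem_empty_iff_false, iff_false]
    rintro ⟨he, h⟩; exact hv ⟨e, he, Or.inr h⟩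
  rw [h1, h2]; simp

lemma degIn_mono' [Finite G.E] {F₁ F₂ : Set G.E} (h : F₁ ⊆ F₂) (v : G.V) :
    G.degIn F₁ v ≤ G.degIn F₂ v := by
  rw [degIn_eq_ncard, degIn_eq_ncard]
  refine Nat.add_le_add ?_ ?_ <;>
    exact Set.ncard_le_ncard (fun e he => ⟨h he.1, he.2⟩) (Set.toFinite _)

lemma degIn_lt' [Finite G.E] {F₁ F₂ : Set G.E} (h : F₁ ⊆ F₂) {e : G.E}
    (he₂ : e ∈ F₂) (he₁ : e ∉ F₁) {v : G.V} (hv : G.src e = v ∨ G.tgt e = v) :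
    G.degIn F₁ v < G.degIn F₂ v := by
  rw [degIn_eq_ncard, degIn_eq_ncard]
  rcases hv with hv | hv
  · have hlt : ({e | e ∈ F₁ ∧ G.src e = v} : Set G.E).ncard
        < ({e | e ∈ F₂ ∧ G.src e = v} : Set G.E).ncard := by
      refine Set.ncard_lt_ncard ⟨fun a ha => ⟨h ha.1, ha.2⟩, fun hss => ?_⟩
          (Set.toFinite _)
      exact he₁ (hss ⟨he₂, hv⟩).1
    have hle : ({e | e ∈ F₁ ∧ G.tgt e = v} : Set G.E).ncard
        ≤ ({e | e ∈ F₂ ∧ G.tgt e = v} : Set G.E).ncard :=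
      Set.ncard_le_ncard (fun a ha => ⟨h ha.1, ha.2⟩) (Set.toFinite _)
    omega
  · have hlt : ({e | e ∈ F₁ ∧ G.tgt e = v} : Set G.E).ncard
        < ({e | e ∈ F₂ ∧ G.tgt e = v} : Set G.E).ncard := by
      refine Set.ncard_lt_ncard ⟨fun a ha => ⟨h ha.1, ha.2⟩, fun hss => ?_⟩
          (Set.toFinite _)
      exact he₁ (hss ⟨he₂, hv⟩).1
    have hle : ({e | e ∈ F₁ ∧ G.src e = v} : Set G.E).ncard
        ≤ ({e | e ∈ F₂ ∧ G.src e = v} : Set G.E).ncard :=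
      Set.ncard_le_ncard (fun a ha => ⟨h ha.1, ha.2⟩) (Set.toFinite _)
    omega

lemma degIn_le_degree' [Finite G.E] (F : Set G.E) (v : G.V) :
    G.degIn F v ≤ G.degree v := by
  classical
  letI : Fintype G.E := Fintype.ofFinite _
  have hdeg : G.degree v = G.degIn Set.univ v := by
    rw [degIn_eq_ncard]
    unfold degree
    rw [← Set.ncard_coe_finset, ← Set.ncard_coe_finset]
    congr 1 <;> · congr 1; ext e; simp
  rw [hdeg]
  exact G.degIn_mono' (Set.subset_univ F) v

open Finset in
lemma sum_degIn' [Fintype G.E] [Fintype G.V] (F : Set G.E) :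
    ∑ v : G.V, G.degIn F v = 2 * Nat.card F := by
  classical
  have hcard : Nat.card F = (univ.filter (· ∈ F)).card := by
    rw [Nat.card_eq_fintype_card]
    simp [Fintype.card_subtype]
  have key : ∀ f : G.E → G.V,
      ∑ v : G.V, ({e | e ∈ F ∧ f e = v} : Set G.E).ncard
        = (univ.filter (· ∈ F)).card := by
    intro f
    rw [Finset.card_eq_sum_card_fiberwise (f := f) (t := univ)
      (fun x _ => mem_univ (f x))]
    refine Finset.sum_congr rfl fun v _ => ?_
    rw [← Set.ncard_coe_finset]
    congr 1; ext e; simp [and_comm]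
  calc ∑ v : G.V, G.degIn F v
      = ∑ v : G.V, (({e | e ∈ F ∧ G.src e = v} : Set G.E).ncard
          + ({e | e ∈ F ∧ G.tgt e = v} : Set G.E).ncard) := by
        refine Finset.sum_congr rfl fun v _ => G.degIn_eq_ncard F v
    _ = (univ.filter (· ∈ F)).card + (univ.filter (· ∈ F)).card := by
        rw [Finset.sum_add_distrib, key G.src, key G.tgt]
    _ = 2 * Nat.card F := by rw [hcard]; ring

lemma conn_iff_of_closed' {F : Set G.E} {S : Set G.V}
    (h : ∀ e ∈ F, (G.src e ∈ S ↔ G.tgt e ∈ S)) {u v : G.V}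
    (huv : G.Conn F u v) : (u ∈ S ↔ v ∈ S) := by
  induction huv with
  | refl => exact Iff.rfl
  | tail _ hstep ih =>
    obtain ⟨e, he, ⟨h1, h2⟩ | ⟨h1, h2⟩⟩ := hstep
    · exact ih.trans (h1 ▸ h2 ▸ h e he)
    · exact ih.trans (h1 ▸ h2 ▸ (h e he).symm)

lemma step_mem_left' {F : Set G.E} {u v : G.V} (h : G.Step F u v) :
    u ∈ G.vertexSet F := by
  obtain ⟨e, he, ⟨h1, _⟩ | ⟨_, h2⟩⟩ := h
  · exact h1 ▸ G.mem_vertexSet_src' he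
  · exact h2 ▸ G.mem_vertexSet_tgt' he

lemma step_mem_right' {F : Set G.E} {u v : G.V} (h : G.Step F u v) :
    v ∈ G.vertexSet F := by
  obtain ⟨e, he, ⟨_, h2⟩ | ⟨h1, _⟩⟩ := h
  · exact h2 ▸ G.mem_vertexSet_tgt' he
  · exact h1 ▸ G.mem_vertexSet_src' he

lemma mem_vertexSet_of_conn' {F : Set G.E} {u v : G.V} (hc : G.Conn F u v)
    (hne : u ≠ v) : u ∈ G.vertexSet F ∧ v ∈ G.vertexSet F := by
  constructor
  · rcases hc.cases_head with h | ⟨c, hstep, _⟩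
    · exact absurd h hne
    · exact G.step_mem_left' hstep
  · rcases hc.cases_tail with h | ⟨c, _, hstep⟩
    · exact absurd h.symm hne
    · exact G.step_mem_right' hstep

end FeynGraph

end AuxLemmas

open FeynGraph in
/-- Let `q₁ ⊆ q₂` be nested connected 1PI quadratically divergent subgraphs of a `φ⁴`
graph `G` (vertices of valency at most `4`).  If `q₁ ⊊ q₂` then no path inside `q₁`
connects the two `3`-valent vertices of `q₂` (i.e. `ε_{q₂}(q₁) = 0`); in fact, if
`q₁` contains both `3`-valent vertices of `q₂`, then `q₁ = q₂`. -/
theorem nested_quadratic_eps_zero (G : FeynGraph) [Finite G.V] [Finite G.E]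
    (hdeg : ∀ v : G.V, G.degree v ≤ 4)
    (q₁ q₂ : Set G.E)
    (hq₁ : G.IsQuadraticSub q₁) (hq₂ : G.IsQuadraticSub q₂) (hsub : q₁ ⊆ q₂) :
    ((q₁ ≠ q₂) → ∀ x y : G.V, x ≠ y →
        G.degIn q₂ x = 3 → G.degIn q₂ y = 3 → ¬ G.Conn q₁ x y) ∧
    (∀ x y : G.V, x ≠ y → G.degIn q₂ x = 3 → G.degIn q₂ y = 3 →
        x ∈ G.vertexSet q₁ → y ∈ G.vertexSet q₁ → q₁ = q₂) := by
  classical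
  letI : Fintype G.E := Fintype.ofFinite _
  letI : Fintype G.V := Fintype.ofFinite _
  have main : ∀ x y : G.V, x ≠ y → G.degIn q₂ x = 3 → G.degIn q₂ y = 3 →
      x ∈ G.vertexSet q₁ → y ∈ G.vertexSet q₁ → q₁ = q₂ := by
    intro x y hxy hdx hdy hx hy
    by_contra hne
    obtain ⟨e₀, he₀₂, he₀₁⟩ : ∃ e, e ∈ q₂ ∧ e ∉ q₁ := by
      by_contra h; push_neg at h
      exact hne (Set.Subset.antisymm hsub h)
    -- counting setup
    set V₁ : Finset G.V := Finset.univ.filter (· ∈ G.vertexSet q₁) with hV₁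
    have hxV : x ∈ V₁ := by simp [hV₁, hx]
    have hyV : y ∈ V₁ := by simp [hV₁, hy]
    have card_V₁ : Nat.card (G.vertexSet q₁) = V₁.card := by
      rw [Nat.card_eq_fintype_card]
      simp [hV₁, Fintype.card_subtype]
    have hedge : Nat.card q₁ + 1 = 2 * V₁.card := by
      have hsd := hq₁.2
      unfold FeynGraph.sdSub at hsd
      rw [card_V₁] at hsd
      omega
    have hsum : ∑ v ∈ V₁, G.degIn q₁ v = 2 * Nat.card q₁ := by
      rw [← G.sum_degIn' q₁]
      refine Finset.sum_subset (Finset.subset_univ _) fun v _ hv => ?_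
      exact G.degIn_of_notMem' (by simpa [hV₁] using hv)
    set f : G.V → ℕ := fun v => if v = x ∨ v = y then 3 else 4 with hf
    have hq2f : ∀ v ∈ V₁, G.degIn q₂ v ≤ f v := by
      intro v _
      by_cases hvxy : v = x ∨ v = y
      · have h3 : G.degIn q₂ v = 3 := by rcases hvxy with rfl | rfl <;> assumption
        simp [hf, hvxy, h3]
      · simp only [hf, if_neg hvxy]
        exact (G.degIn_le_degree' q₂ v).trans (hdeg v)
    have hle : ∀ v ∈ V₁, G.degIn q₁ v ≤ f v :=
      fun v hv => (G.degIn_mono' hsub v).trans (hq2f v hv)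
    have hsumf : ∑ v ∈ V₁, f v + 2 = 4 * V₁.card := by
      have hfilter : V₁.filter (fun v => v = x ∨ v = y) = {x, y} := by
        ext v
        simp only [Finset.mem_filter, Finset.mem_insert, Finset.mem_singleton]
        constructor
        · rintro ⟨_, h⟩; exact h
        · rintro (rfl | rfl)
          · exact ⟨hxV, Or.inl rfl⟩
          · exact ⟨hyV, Or.inr rfl⟩
      have hind : ∑ v ∈ V₁, (if v = x ∨ v = y then 1 else 0) = 2 := by
        rw [Finset.sum_boole]
        rw [hfilter]
        simp [Finset.card_insert_of_notMem, hxy]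
      have h4 : ∑ v ∈ V₁, (f v + (if v = x ∨ v = y then 1 else 0)) = 4 * V₁.card := by
        rw [Finset.sum_congr rfl (g := fun _ => 4)
          (fun v _ => by by_cases h : v = x ∨ v = y <;> simp [hf, h])]
        rw [Finset.sum_const, smul_eq_mul, mul_comm]
      rw [Finset.sum_add_distrib, hind] at h4
      exact h4
    -- no edge of q₂ \ q₁ touches vertexSet q₁
    have hclosed : ∀ e ∈ q₂,
        (G.src e ∈ G.vertexSet q₁ ∨ G.tgt e ∈ G.vertexSet q₁) → e ∈ q₁ := by
      intro e he₂ hend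
      by_contra he₁
      obtain ⟨v, hvmem, hv⟩ : ∃ v, v ∈ G.vertexSet q₁ ∧ (G.src e = v ∨ G.tgt e = v) := by
        rcases hend with h | h
        · exact ⟨G.src e, h, Or.inl rfl⟩
        · exact ⟨G.tgt e, h, Or.inr rfl⟩
      have hvV : v ∈ V₁ := by simp [hV₁, hvmem]
      have hlt : G.degIn q₁ v < G.degIn q₂ v := G.degIn_lt' hsub he₂ he₁ hv
      have hstrict : ∑ v ∈ V₁, G.degIn q₁ v < ∑ v ∈ V₁, f v :=
        Finset.sum_lt_sum hle ⟨v, hvV, lt_of_lt_of_le hlt (hq2f v hvV)⟩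
      omega
    -- connectivity contradiction
    have hiff : ∀ e ∈ q₂, (G.src e ∈ G.vertexSet q₁ ↔ G.tgt e ∈ G.vertexSet q₁) := by
      intro e he
      constructor
      · intro h; exact G.mem_vertexSet_tgt' (hclosed e he (Or.inl h))
      · intro h; exact G.mem_vertexSet_src' (hclosed e he (Or.inr h))
    have hxv2 : x ∈ G.vertexSet q₂ := by
      obtain ⟨e, he, h⟩ := hx
      exact ⟨e, hsub he, h⟩
    have hconn : G.Conn q₂ (G.src e₀) x :=
      hq₂.1.2.1 _ _ (G.mem_vertexSet_src' he₀₂) hxv2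
    have hsrc : G.src e₀ ∈ G.vertexSet q₁ :=
      (G.conn_iff_of_closed' hiff hconn).mpr hx
    exact he₀₁ (hclosed e₀ he₀₂ (Or.inl hsrc))
  refine ⟨?_, main⟩
  intro hne x y hxy hdx hdy hconn
  obtain ⟨hx, hy⟩ := G.mem_vertexSet_of_conn' hconn hxy
  exact hne (main x y hxy hdx hdy hx hy)
end
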